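/- For all x in [0, π], (π − x)² · x · cot(x/2) + 2π·(x + sin x − π) ≥ 0, with equality only at x = 0. -/

import Mathlib

open Real

/-- The expression `(π − x)² · x · cot(x/2) + 2π·(x + sin x − π)`, interpreted by
continuous extension at `x = 0` (where `x · cot(x/2) → 2`, giving the value `0`). -/
noncomputable def F (x : ℝ) : ℝ :=
  if x = 0 then 0
  else (π - x) ^ 2 * x * Real.cot (x / 2) + 2 * π * (x + Real.sin x - π)

/-!
With `u = (π - x) / 2` one has `F x · sin (x / 2) = 4 G u`, where
`G u = u² (π - 2u) sin u - π cos u (u - sin (2u) / 2)`, so it suffices that `G > 0` on `(0, π/2)`.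
For `u ≤ 4/5` the Taylor bounds `sin u ≥ u - u³/6`, `cos u ≤ 1 - u²/2 + u⁴/24` and the seventh
order lower bound for `sin (2u)` give `G u ≥ u³ p(u)` with an explicit polynomial `p > 0`; for
`u > 4/5` the same is done in the variable `d = π/2 - u ≤ 0.7708`. The Taylor bounds of either sign
come from the alternating partial sums of the sine and cosine series, each obtained from the
previous one by integrating a sign condition on `[0, x]`.
-/

open Finset

lemma le_of_hasDerivAt_nonneg {f f' : ℝ → ℝ} {a x : ℝ} (hf : ∀ t, HasDerivAt f (f' t) t)
    (hf' : ∀ t, a ≤ t → 0 ≤ f' t) (hax : a ≤ x) : f a ≤ f x := by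
  refine monotoneOn_of_hasDerivWithinAt_nonneg (convex_Ici a)
    (fun t _ => (hf t).continuousAt.continuousWithinAt) (fun t _ => (hf t).hasDerivWithinAt)
    (fun t ht => hf' t ?_) Set.self_mem_Ici hax hax
  rw [interior_Ici] at ht
  exact le_of_lt ht

noncomputable def sinTaylor (n : ℕ) (x : ℝ) : ℝ :=
  ∑ k ∈ range n, (-1) ^ k * x ^ (2 * k + 1) / (2 * k + 1).factorial

noncomputable def cosTaylor (n : ℕ) (x : ℝ) : ℝ :=
  ∑ k ∈ range n, (-1) ^ k * x ^ (2 * k) / (2 * k).factorial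

lemma hasDerivAt_sinTaylor (n : ℕ) (x : ℝ) : HasDerivAt (sinTaylor n) (cosTaylor n x) x := by
  refine HasDerivAt.fun_sum fun k _ => ?_
  refine (((hasDerivAt_pow (2 * k + 1) x).const_mul ((-1 : ℝ) ^ k)).div_const
    ((2 * k + 1).factorial : ℝ)).congr_deriv ?_
  rw [Nat.factorial_succ]
  push_cast
  field_simp

lemma hasDerivAt_cosTaylor (n : ℕ) (x : ℝ) :
    HasDerivAt (cosTaylor (n + 1)) (-sinTaylor n x) x := by
  have h : cosTaylor (n + 1) = fun y => ∑ k ∈ range n,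
      (-1 : ℝ) ^ (k + 1) * y ^ (2 * k + 2) / (2 * k + 2).factorial + 1 := by
    funext y
    simp [cosTaylor, sum_range_succ', mul_add]
  rw [h, sinTaylor, ← sum_neg_distrib]
  refine (HasDerivAt.fun_sum fun k _ => ?_).add_const 1
  refine (((hasDerivAt_pow (2 * k + 2) x).const_mul ((-1 : ℝ) ^ (k + 1))).div_const
    ((2 * k + 2).factorial : ℝ)).congr_deriv ?_
  rw [show 2 * k + 2 = (2 * k + 1) + 1 by ring, Nat.factorial_succ]
  push_cast
  field_simp
  ring

lemma alternating_taylor_bounds (n : ℕ) {x : ℝ} (hx : 0 ≤ x) :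
    0 ≤ (-1) ^ n * (cosTaylor (n + 1) x - cos x) ∧
      0 ≤ (-1) ^ n * (sinTaylor (n + 1) x - sin x) := by
  induction n generalizing x with
  | zero => simp [cosTaylor, sinTaylor, cos_le_one, sin_le hx]
  | succ n ih =>
    have hcos {y : ℝ} (hy : 0 ≤ y) : 0 ≤ (-1) ^ (n + 1) * (cosTaylor (n + 2) y - cos y) := by
      simpa [cosTaylor, sum_range_succ'] using le_of_hasDerivAt_nonneg
        (fun t => ((hasDerivAt_cosTaylor (n + 1) t).sub (hasDerivAt_cos t)).const_mul _)
        (fun t ht => by linear_combination (ih ht).2) hy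
    refine ⟨hcos hx, ?_⟩
    simpa [sinTaylor, sum_range_succ'] using le_of_hasDerivAt_nonneg
      (fun t => ((hasDerivAt_sinTaylor (n + 2) t).sub (hasDerivAt_sin t)).const_mul _)
      (fun t ht => hcos ht) hx

lemma sin_le_taylor5 {x : ℝ} (hx : 0 ≤ x) : sin x ≤ x - x ^ 3 / 6 + x ^ 5 / 120 := by
  have := (alternating_taylor_bounds 2 hx).2
  norm_num [sinTaylor, sum_range_succ, Nat.factorial] at this
  linarith

lemma cos_le_taylor4 {x : ℝ} (hx : 0 ≤ x) : cos x ≤ 1 - x ^ 2 / 2 + x ^ 4 / 24 := by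
  have := (alternating_taylor_bounds 2 hx).1
  norm_num [cosTaylor, sum_range_succ, Nat.factorial] at this
  linarith

lemma taylor7_le_sin {x : ℝ} (hx : 0 ≤ x) : x - x ^ 3 / 6 + x ^ 5 / 120 - x ^ 7 / 5040 ≤ sin x := by
  have := (alternating_taylor_bounds 3 hx).2
  norm_num [sinTaylor, sum_range_succ, Nat.factorial] at this
  linarith

lemma sub_sin_two_mul_div_two_le {x : ℝ} (hx : 0 ≤ x) :
    x - sin (2 * x) / 2 ≤ 2 * x ^ 3 / 3 - 2 * x ^ 5 / 15 + 4 * x ^ 7 / 315 := by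
  linarith [taylor7_le_sin (by positivity : 0 ≤ 2 * x)]

noncomputable def G (u : ℝ) : ℝ := u ^ 2 * (π - 2 * u) * sin u - π * cos u * (u - sin (2 * u) / 2)

lemma F_mul_sin_half {x : ℝ} (hx : sin (x / 2) ≠ 0) : F x * sin (x / 2) = 4 * G ((π - x) / 2) := by
  have hx0 : x ≠ 0 := by rintro rfl; simp at hx
  have hsin : sin ((π - x) / 2) = cos (x / 2) := by
    rw [show (π - x) / 2 = π / 2 - x / 2 by ring, sin_pi_div_two_sub]
  have hcos : cos ((π - x) / 2) = sin (x / 2) := by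
    rw [show (π - x) / 2 = π / 2 - x / 2 by ring, cos_pi_div_two_sub]
  have hsin2 : sin (2 * ((π - x) / 2)) = sin x := by
    rw [show 2 * ((π - x) / 2) = π - x by ring, sin_pi_sub]
  rw [F, if_neg hx0, cot_eq_cos_div_sin, G, hsin, hcos, hsin2]
  field_simp
  ring

lemma taylor_poly_pos_of_le_four_fifths {u : ℝ} (h0 : 0 ≤ u) (h1 : u ≤ 4 / 5) :
    0 < (π - 2 * u) * (1 - u ^ 2 / 6)
      - π * (1 - u ^ 2 / 2 + u ^ 4 / 24) * (2 / 3 - 2 * u ^ 2 / 15 + 4 * u ^ 4 / 315) := by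
  have hπ₀ : (3.141592 : ℝ) < π := pi_gt_d6
  have hπ₁ : π < 3.141593 := pi_lt_d6
  nlinarith [mul_nonneg h0 (sub_nonneg.2 h1), mul_nonneg (mul_nonneg h0 h0) (sub_nonneg.2 h1),
    sq_nonneg (u - 1 / 2), mul_nonneg (mul_nonneg (mul_nonneg h0 h0) h0) (sub_nonneg.2 h1),
    pow_le_pow_left₀ h0 h1 4, pow_le_pow_left₀ h0 h1 6, pow_le_pow_left₀ h0 h1 8]

lemma taylor_poly_pi_div_two_sub_pos {d : ℝ} (h0 : 0 ≤ d) (h1 : d ≤ 0.7708) :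
    0 < 2 - π ^ 2 / 6 - d ^ 2 - π ^ 2 * d ^ 2 / 240 + 47 * π * d ^ 3 / 180 - 17 * π * d ^ 5 / 420
      + 61 * π * d ^ 7 / 18900 - π * d ^ 9 / 9450 := by
  have hπ₀ : (3.141592 : ℝ) < π := pi_gt_d6
  have hπ₁ : π < 3.141593 := pi_lt_d6
  nlinarith [mul_nonneg h0 (sub_nonneg.2 h1), mul_nonneg (mul_nonneg h0 h0) (sub_nonneg.2 h1),
    mul_nonneg (mul_nonneg (mul_nonneg h0 h0) h0) (sub_nonneg.2 h1),
    pow_le_pow_left₀ h0 h1 3, pow_le_pow_left₀ h0 h1 5, pow_le_pow_left₀ h0 h1 7,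
    pow_le_pow_left₀ h0 h1 9, sq_nonneg (d - 1 / 2)]

lemma G_pos_of_le_four_fifths {u : ℝ} (h0 : 0 < u) (h1 : u ≤ 4 / 5) : 0 < G u := by
  have hπ : 3 < π := pi_gt_three
  have hsin := sin_ge_sub_cube h0.le
  have hcos := cos_le_taylor4 h0.le
  have hcos₀ : 0 < cos u := cos_pos_of_mem_Ioo ⟨by linarith, by linarith⟩
  have hrem := sub_sin_two_mul_div_two_le h0.le
  have hrem₀ : 0 ≤ u - sin (2 * u) / 2 := by linarith [sin_le (by positivity : 0 ≤ 2 * u)]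
  calc 0 < u ^ 3 * ((π - 2 * u) * (1 - u ^ 2 / 6)
        - π * (1 - u ^ 2 / 2 + u ^ 4 / 24) * (2 / 3 - 2 * u ^ 2 / 15 + 4 * u ^ 4 / 315)) :=
        mul_pos (by positivity) (taylor_poly_pos_of_le_four_fifths h0.le h1)
    _ = u ^ 2 * (π - 2 * u) * (u - u ^ 3 / 6) - π * (1 - u ^ 2 / 2 + u ^ 4 / 24)
        * (2 * u ^ 3 / 3 - 2 * u ^ 5 / 15 + 4 * u ^ 7 / 315) := by ring
    _ ≤ G u := by
      have hsin' : u ^ 2 * (π - 2 * u) * (u - u ^ 3 / 6) ≤ u ^ 2 * (π - 2 * u) * sin u :=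
        mul_le_mul_of_nonneg_left hsin (mul_nonneg (sq_nonneg u) (by linarith))
      have hprod : cos u * (u - sin (2 * u) / 2) ≤ (1 - u ^ 2 / 2 + u ^ 4 / 24)
          * (2 * u ^ 3 / 3 - 2 * u ^ 5 / 15 + 4 * u ^ 7 / 315) :=
        mul_le_mul hcos hrem hrem₀ (by linarith)
      unfold G
      linarith [mul_le_mul_of_nonneg_left hprod pi_pos.le]

lemma G_pi_div_two_sub (d : ℝ) :
    G (π / 2 - d) = 2 * d * (π / 2 - d) ^ 2 * cos d - π * sin d * (π / 2 - d - sin (2 * d) / 2) := by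
  rw [G, sin_pi_div_two_sub, cos_pi_div_two_sub, show 2 * (π / 2 - d) = π - 2 * d by ring,
    sin_pi_sub]
  ring

lemma G_pi_div_two_sub_pos {d : ℝ} (h0 : 0 < d) (h1 : d ≤ 0.7708) : 0 < G (π / 2 - d) := by
  have hπ : 3.1415 < π := pi_gt_d4
  have hcos : 1 - d ^ 2 / 2 ≤ cos d := one_sub_sq_div_two_le_cos
  have hsin := sin_le_taylor5 h0.le
  have hsin₀ : 0 ≤ sin d := sin_nonneg_of_nonneg_of_le_pi h0.le (by linarith)
  have hrem := sub_sin_two_mul_div_two_le h0.le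
  have hrem₀ : 0 ≤ π / 2 - d - sin (2 * d) / 2 := by
    linarith [sin_le (by positivity : 0 ≤ 2 * d)]
  rw [G_pi_div_two_sub]
  calc 0 < d ^ 3 * (2 - π ^ 2 / 6 - d ^ 2 - π ^ 2 * d ^ 2 / 240 + 47 * π * d ^ 3 / 180
        - 17 * π * d ^ 5 / 420 + 61 * π * d ^ 7 / 18900 - π * d ^ 9 / 9450) :=
        mul_pos (by positivity) (taylor_poly_pi_div_two_sub_pos h0.le h1)
    _ = 2 * d * (π / 2 - d) ^ 2 * (1 - d ^ 2 / 2) - π * (d - d ^ 3 / 6 + d ^ 5 / 120)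
        * (π / 2 - 2 * d + 2 * d ^ 3 / 3 - 2 * d ^ 5 / 15 + 4 * d ^ 7 / 315) := by ring
    _ ≤ 2 * d * (π / 2 - d) ^ 2 * cos d - π * sin d * (π / 2 - d - sin (2 * d) / 2) := by
      have hcos' := mul_le_mul_of_nonneg_left hcos (by positivity : 0 ≤ 2 * d * (π / 2 - d) ^ 2)
      have hprod : sin d * (π / 2 - d - sin (2 * d) / 2) ≤ (d - d ^ 3 / 6 + d ^ 5 / 120)
          * (π / 2 - 2 * d + 2 * d ^ 3 / 3 - 2 * d ^ 5 / 15 + 4 * d ^ 7 / 315) :=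
        mul_le_mul hsin (by linarith) hrem₀ (by linarith)
      linarith [mul_le_mul_of_nonneg_left hprod pi_pos.le]

lemma G_pos {u : ℝ} (h0 : 0 < u) (h1 : u < π / 2) : 0 < G u := by
  rcases le_or_gt u (4 / 5) with hu | hu
  · exact G_pos_of_le_four_fifths h0 hu
  · have hπ : π < 3.1416 := pi_lt_d4
    simpa using G_pi_div_two_sub_pos (d := π / 2 - u) (by linarith) (by linarith)

lemma F_pos {x : ℝ} (hx : x ∈ Set.Ioo 0 π) : 0 < F x := by
  obtain ⟨h0, h1⟩ := hx
  have hsin : 0 < sin (x / 2) := sin_pos_of_pos_of_lt_pi (by linarith) (by linarith)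
  have hG : 0 < F x * sin (x / 2) := by
    rw [F_mul_sin_half hsin.ne']
    exact mul_pos four_pos (G_pos (by linarith) (by linarith))
  exact pos_of_mul_pos_left hG hsin.le

theorem stmt_4 :
    (∀ x ∈ Set.Icc (0 : ℝ) π, 0 ≤ F x) ∧
    (∀ x ∈ Set.Ioo (0 : ℝ) π, 0 < F x) ∧ F 0 = 0 := by
  have hF₀ : F 0 = 0 := if_pos rfl
  have hFπ : F π = 0 := by simp [F, pi_ne_zero]
  refine ⟨fun x ⟨h0, h1⟩ => ?_, fun x => F_pos, hF₀⟩
  rcases h0.eq_or_lt with rfl | h0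
  · exact hF₀.ge
  rcases h1.eq_or_lt with rfl | h1
  · exact hFπ.ge
  exact (F_pos ⟨h0, h1⟩).le
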